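/- For a standard Gaussian vector Z in ℝ^d and any t ∈ (0, √d), P(|‖Z‖ − √d| ≥ t) ≤ 2·exp(−c·t²) for an absolute constant c > 0 (concentration of the norm near the sphere of radius √d). -/

import Mathlib

/-!
Chernoff bound for `‖Z‖² = ∑ Zᵢ²`: its moment generating function is `(1 - 2l)^(-d/2)`, which is
at most `exp (d (l + 3l²))` for `l ≤ 1/6`. Taking `l = ± t / (6√d)` bounds the probabilities of
`‖Z‖² ≥ d + t√d` and `‖Z‖² ≤ d - t√d` by `exp (-t²/12)` each, and for `t ≤ √d` these two events
cover `|‖Z‖ - √d| ≥ t`.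
-/

open MeasureTheory ProbabilityTheory Real

lemma gaussianPDFReal_zero_one_mul_exp_mul_sq (l x : ℝ) :
    gaussianPDFReal 0 1 x * exp (l * x ^ 2) = (√(2 * π))⁻¹ * exp (-(1 / 2 - l) * x ^ 2) := by
  rw [gaussianPDFReal, mul_assoc, ← exp_add]
  congr 2
  · simp
  · push_cast
    ring

lemma integrable_exp_mul_sq_gaussianReal {l : ℝ} (hl : l < 1 / 2) :
    Integrable (fun x => exp (l * x ^ 2)) (gaussianReal 0 1) := by
  rw [gaussianReal_of_var_ne_zero 0 one_ne_zero, gaussianPDF_def,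
    integrable_withDensity_iff (by fun_prop) (ae_of_all _ fun _ => ENNReal.ofReal_lt_top)]
  simp_rw [ENNReal.toReal_ofReal (gaussianPDFReal_nonneg 0 1 _), mul_comm (exp _),
    gaussianPDFReal_zero_one_mul_exp_mul_sq]
  exact (integrable_exp_neg_mul_sq (sub_pos.2 hl)).const_mul _

-- For `1/2 ≤ l` both sides are junk `0`: the integral diverges, and `√` of a nonpositive number
-- is `0`.
lemma mgf_sq_gaussianReal (l : ℝ) :
    mgf (fun x => x ^ 2) (gaussianReal 0 1) l = (√(1 - 2 * l))⁻¹ := by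
  rw [mgf, integral_gaussianReal_eq_integral_smul one_ne_zero]
  simp_rw [smul_eq_mul, gaussianPDFReal_zero_one_mul_exp_mul_sq]
  rw [integral_const_mul, integral_gaussian, ← sqrt_inv, ← sqrt_inv, ← sqrt_mul (by positivity)]
  congr 1
  field_simp

lemma inv_sqrt_one_sub_two_mul_le_exp {l : ℝ} (hl : l ≤ 1 / 6) :
    (√(1 - 2 * l))⁻¹ ≤ exp (l + 3 * l ^ 2) := by
  have hpos : 0 < 1 - 2 * l := by linarith
  -- `(1 - 2l)(1 + 2l + 6l²) = 1 + 2l²(1 - 6l)`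
  have key : 1 ≤ (1 - 2 * l) * exp (l + 3 * l ^ 2) ^ 2 := by
    rw [← exp_nat_mul]
    refine le_trans ?_ (mul_le_mul_of_nonneg_left (add_one_le_exp _) hpos.le)
    push_cast
    nlinarith [sq_nonneg l]
  rw [inv_le_iff_one_le_mul₀' (sqrt_pos.2 hpos), ← sqrt_sq (exp_pos _).le, ← sqrt_mul hpos.le]
  exact one_le_sqrt.2 key

lemma mgf_sum_pi {ι E : Type*} [Fintype ι] [MeasurableSpace E] (μ : Measure E) [SigmaFinite μ]
    (f : E → ℝ) (l : ℝ) :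
    mgf (fun z : ι → E => ∑ i, f (z i)) (Measure.pi fun _ => μ) l
      = mgf f μ l ^ Fintype.card ι := by
  simp_rw [mgf, Finset.mul_sum, exp_sum]
  exact integral_fintype_prod_eq_pow fun x => exp (l * f x)

lemma integrable_exp_mul_sum_pi {ι E : Type*} [Fintype ι] [MeasurableSpace E] {μ : Measure E}
    [SigmaFinite μ] {f : E → ℝ} {l : ℝ} (h : Integrable (fun x => exp (l * f x)) μ) :
    Integrable (fun z : ι → E => exp (l * ∑ i, f (z i))) (Measure.pi fun _ => μ) := by
  simp_rw [Finset.mul_sum, exp_sum]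
  exact Integrable.fintype_prod fun _ => h

lemma sq_add_mul_le_or_le_sq_sub_mul_of_le_abs_sqrt_sub {x s t : ℝ} (hx : 0 ≤ x) (ht : 0 ≤ t)
    (hts : t ≤ s) (h : t ≤ |√x - s|) : s ^ 2 + t * s ≤ x ∨ x ≤ s ^ 2 - t * s := by
  have hsq : √x ^ 2 = x := sq_sqrt hx
  rcases le_abs.1 h with h | h
  · left
    nlinarith [sqrt_nonneg x]
  · right
    nlinarith [sqrt_nonneg x]

section StandardGaussianVector

variable {ι : Type*} [Fintype ι]

lemma mgf_sum_sq_pi_gaussianReal_le {l : ℝ} (hl : l ≤ 1 / 6) :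
    mgf (fun z : ι → ℝ => ∑ i, z i ^ 2)
      (Measure.pi fun _ : ι => gaussianReal 0 1) l ≤ exp ((l + 3 * l ^ 2) * Fintype.card ι) := by
  rw [mgf_sum_pi (gaussianReal 0 1) (fun x => x ^ 2), mgf_sq_gaussianReal,
    mul_comm _ (Fintype.card ι : ℝ), exp_nat_mul]
  exact pow_le_pow_left₀ (by positivity) (inv_sqrt_one_sub_two_mul_le_exp hl) _

lemma measureReal_sum_sq_ge_le {l : ℝ} (hl₀ : 0 ≤ l) (hl : l ≤ 1 / 6) (a : ℝ) :
    (Measure.pi fun _ : ι => gaussianReal 0 1).real {z | a ≤ ∑ i, z i ^ 2}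
      ≤ exp (-l * a + (l + 3 * l ^ 2) * Fintype.card ι) := by
  rw [exp_add]
  refine (measure_ge_le_exp_mul_mgf a hl₀ ?_).trans ?_
  · exact integrable_exp_mul_sum_pi (integrable_exp_mul_sq_gaussianReal (by linarith))
  · exact mul_le_mul_of_nonneg_left (mgf_sum_sq_pi_gaussianReal_le hl) (exp_pos _).le

lemma measureReal_sum_sq_le_le {l : ℝ} (hl : l ≤ 0) (a : ℝ) :
    (Measure.pi fun _ : ι => gaussianReal 0 1).real {z | ∑ i, z i ^ 2 ≤ a}
      ≤ exp (-l * a + (l + 3 * l ^ 2) * Fintype.card ι) := by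
  rw [exp_add]
  refine (measure_le_le_exp_mul_mgf a hl ?_).trans ?_
  · exact integrable_exp_mul_sum_pi (integrable_exp_mul_sq_gaussianReal (by linarith))
  · exact mul_le_mul_of_nonneg_left (mgf_sum_sq_pi_gaussianReal_le (by linarith)) (exp_pos _).le

lemma measureReal_le_abs_sqrt_sum_sq_sub_sqrt_card_le {t : ℝ} (ht : 0 < t)
    (htn : t ≤ √(Fintype.card ι)) :
    (Measure.pi fun _ : ι => gaussianReal 0 1).real
        {z | t ≤ |√(∑ i, z i ^ 2) - √(Fintype.card ι)|} ≤ 2 * exp (-(t ^ 2 / 12)) := by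
  set s := √(Fintype.card ι)
  have hs : 0 < s := ht.trans_le htn
  have hs2 : (Fintype.card ι : ℝ) = s ^ 2 := (sq_sqrt (Nat.cast_nonneg _)).symm
  -- `l = t / (6 s)` minimizes the Chernoff exponent `-l t s + 3 l² s²`
  set l := t / (6 * s)
  have hl : l ≤ 1 / 6 := by
    rw [div_le_iff₀ (by positivity)]
    linarith
  have hupper : -l * (s ^ 2 + t * s) + (l + 3 * l ^ 2) * s ^ 2 = -(t ^ 2 / 12) := by
    simp only [l]
    field_simp
    ring
  have hlower : -(-l) * (s ^ 2 - t * s) + (-l + 3 * (-l) ^ 2) * s ^ 2 = -(t ^ 2 / 12) := by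
    simp only [l]
    field_simp
    ring
  calc _ ≤ (Measure.pi fun _ : ι => gaussianReal 0 1).real
          ({z | s ^ 2 + t * s ≤ ∑ i, z i ^ 2} ∪ {z | ∑ i, z i ^ 2 ≤ s ^ 2 - t * s}) :=
        measureReal_mono fun z hz => sq_add_mul_le_or_le_sq_sub_mul_of_le_abs_sqrt_sub
          (Finset.sum_nonneg fun i _ => sq_nonneg (z i)) ht.le htn hz
    _ ≤ _ := measureReal_union_le _ _
    _ ≤ exp (-(t ^ 2 / 12)) + exp (-(t ^ 2 / 12)) := by
        gcongr
        · exact (measureReal_sum_sq_ge_le (by positivity) hl _).trans_eq (by rw [hs2, hupper])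
        · exact (measureReal_sum_sq_le_le (l := -l) (neg_nonpos.2 (by positivity)) _).trans_eq
            (by rw [hs2, hlower])
    _ = 2 * exp (-(t ^ 2 / 12)) := (two_mul _).symm

end StandardGaussianVector

/-- Concentration of the norm of a standard Gaussian vector near the sphere
of radius `√d`: there is an absolute constant `c > 0` such that for every dimension `d`
and every `t ∈ (0, √d)`, `P(|‖Z‖ − √d| ≥ t) ≤ 2·exp(−c·t²)`. -/
theorem stmt3 :
    ∃ c : ℝ, 0 < c ∧ ∀ (d : ℕ) (t : ℝ), 0 < t → t < Real.sqrt d →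
      (Measure.pi fun _ : Fin d => gaussianReal 0 1)
          {z : Fin d → ℝ | t ≤ |Real.sqrt (∑ i, z i ^ 2) - Real.sqrt d|}
        ≤ ENNReal.ofReal (2 * Real.exp (-c * t ^ 2)) := by
  refine ⟨1 / 12, by norm_num, fun d t ht htd => ?_⟩
  have h := measureReal_le_abs_sqrt_sum_sq_sub_sqrt_card_le (ι := Fin d) ht
    (by simpa using htd.le)
  rw [Fintype.card_fin] at h
  rw [← ofReal_measureReal]
  exact ENNReal.ofReal_le_ofReal (h.trans_eq (by ring_nf))
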